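/- Let H be a graph on n vertices with girth m, odd and finite, and G = W(H), q = (m+1)/2. Then the minimum cardinality of a facet of MF^q(G) equals n. In particular, taking an odd cycle C of length m in H and S = V(H) \ V(C), the set consisting of V(C) together with all whisker vertices of vertices in S is a facet of MF^q(G) of cardinality n. -/

import Mathlib

variable {V : Type*}

/-- `M` is a set of pairwise disjoint edges of `G` with all endpoints in `F`. -/
def IsMatchingOn (G : SimpleGraph V) (F : Finset V) (M : Finset (Sym2 V)) : Prop :=
  (∀ e ∈ M, e ∈ G.edgeSet) ∧
  (∀ e ∈ M, ∀ v ∈ e, v ∈ F) ∧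
  (∀ e ∈ M, ∀ e' ∈ M, e ≠ e' → ∀ v ∈ e, v ∉ e')

/-- `F` is a face of the `q`-matching-free complex `MF^q(G)`. -/
def MFFace (G : SimpleGraph V) (q : ℕ) (F : Finset V) : Prop :=
  ¬ ∃ M : Finset (Sym2 V), IsMatchingOn G F M ∧ M.card = q

/-- `F` is a facet (maximal face) of the complex with face predicate `faces`. -/
def IsFacet (faces : Finset V → Prop) (F : Finset V) : Prop :=
  faces F ∧ ∀ F', faces F' → F ⊆ F' → F = F'

/-- Even-connection of `u` and `v` with respect to the pairwise disjoint edges in `M`. -/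
def EvenConnected (G : SimpleGraph V) (M : Finset (Sym2 V)) (u v : V) : Prop :=
  ∃ (r : ℕ) (p : ℕ → V), 1 ≤ r ∧ p 0 = u ∧ p (2 * r + 1) = v ∧
    (∀ k, k ≤ 2 * r → G.Adj (p k) (p (k + 1))) ∧
    (∀ k, k < r → s(p (2 * k + 1), p (2 * k + 2)) ∈ M) ∧
    (∀ k l, k < r → l < r →
      s(p (2 * k + 1), p (2 * k + 2)) = s(p (2 * l + 1), p (2 * l + 2)) → k = l)

/-- The set of vertices covered by the edges in `M`. -/
def mSupp (M : Finset (Sym2 V)) : Set V := {v | ∃ e ∈ M, v ∈ e}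

/-- The even-connection graph `G^{e₁⋯e_q}` (vertices covered by `M` are isolated). -/
def evenConnGraph (G : SimpleGraph V) (M : Finset (Sym2 V)) : SimpleGraph V where
  Adj x y := x ≠ y ∧ x ∉ mSupp M ∧ y ∉ mSupp M ∧
    (G.Adj x y ∨ EvenConnected G M x y ∨ EvenConnected G M y x)
  symm := by
    constructor
    rintro x y ⟨hne, hx, hy, h⟩
    refine ⟨hne.symm, hy, hx, ?_⟩
    rcases h with h | h | h
    · exact Or.inl h.symm
    · exact Or.inr (Or.inr h)
    · exact Or.inr (Or.inl h)
  loopless := ⟨fun x h => h.1 rfl⟩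

/-- Delete a set of vertices from a graph (keeping them as isolated vertices). -/
def delSet (G : SimpleGraph V) (S : Set V) : SimpleGraph V where
  Adj x y := G.Adj x y ∧ x ∉ S ∧ y ∉ S
  symm := ⟨fun x y ⟨h, hx, hy⟩ => ⟨h.symm, hy, hx⟩⟩
  loopless := ⟨fun x ⟨h, _, _⟩ => G.loopless.irrefl x h⟩

/-- The whisker graph `W(H)`: each vertex `x` (as `Sum.inl x`) gets a pendant
whisker vertex `Sum.inr x`. -/
def whisker (H : SimpleGraph V) : SimpleGraph (V ⊕ V) where
  Adj x y :=
    (∃ a b, x = Sum.inl a ∧ y = Sum.inl b ∧ H.Adj a b) ∨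
    (∃ a, (x = Sum.inl a ∧ y = Sum.inr a) ∨ (x = Sum.inr a ∧ y = Sum.inl a))
  symm := by
    constructor
    rintro x y (⟨a, b, hx, hy, hab⟩ | ⟨a, h | h⟩)
    · exact Or.inl ⟨b, a, hy, hx, hab.symm⟩
    · exact Or.inr ⟨a, Or.inr ⟨h.2, h.1⟩⟩
    · exact Or.inr ⟨a, Or.inl ⟨h.2, h.1⟩⟩
  loopless := by
    constructor
    rintro x (⟨a, b, hx, hy, hab⟩ | ⟨a, ⟨h1, h2⟩ | ⟨h1, h2⟩⟩)
    · obtain rfl := Sum.inl_injective (hx ▸ hy : (Sum.inl a : V ⊕ V) = Sum.inl b)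
      exact H.loopless.irrefl a hab
    · exact Sum.inl_ne_inr (h1 ▸ h2 : (Sum.inl a : V ⊕ V) = Sum.inr a)
    · exact Sum.inr_ne_inl (h1 ▸ h2 : (Sum.inr a : V ⊕ V) = Sum.inl a)

/-- Shellability of the complex with face predicate `faces`: there is a linear
order `F 0, F 1, …` of all facets such that each facet meets the union of the
previous ones in a pure subcomplex of codimension one. -/
def Shellable (faces : Finset V → Prop) : Prop :=
  ∃ (t : ℕ) (F : Fin t → Finset V),
    (∀ i, IsFacet faces (F i)) ∧
    (∀ F', IsFacet faces F' → ∃ i, F' = F i) ∧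
    Function.Injective F ∧
    ∀ k : Fin t, 0 < (k : ℕ) → ∀ σ : Finset V, σ ⊆ F k →
      (∃ i, i < k ∧ σ ⊆ F i) →
      ∃ τ : Finset V, σ ⊆ τ ∧ τ ⊆ F k ∧ (∃ i, i < k ∧ τ ⊆ F i) ∧
        τ.card = (F k).card - 1

/-- Vertex decomposability of the complex with face predicate `faces`. -/
inductive VertexDecomposable [DecidableEq V] : (Finset V → Prop) → Prop
  | simplex (faces : Finset V → Prop) (F : Finset V)
      (h : ∀ F', faces F' ↔ F' ⊆ F) : VertexDecomposable faces
  | shed (faces : Finset V → Prop) (v : V)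
      (hdel : VertexDecomposable (fun F => faces F ∧ v ∉ F))
      (hlink : VertexDecomposable (fun F => v ∉ F ∧ faces (insert v F)))
      (hshed : ∀ F, v ∉ F → faces (insert v F) →
        ¬ IsFacet (fun F' => faces F' ∧ v ∉ F') F) :
      VertexDecomposable faces

/-!
A facet `F` of `MF^q(W(H))` contains `x_a` or `y_a` for every vertex `a` of `H`: otherwise the
whisker `y_a`, whose only neighbour is `x_a`, could be added to `F` without creating a new
matching. Hence `|F| ≥ n`.

For a cycle `C` of length `m = 2q - 1`, the transversal `T = V(C) ∪ {y_a : a ∉ V(C)}` has `n`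
vertices and is a face, since a matching inside `T` only uses the `m` vertices `x_a`, `a ∈ V(C)`.
It is maximal because odd cycles are factor-critical: a set strictly larger than `T` contains
both `x_a` and `y_a` for some `a`, and the edge `x_a y_a` together with a perfect matching of
`C - a` (or of `C - b` for any `b`, if `a ∉ V(C)`) is a matching with `q` edges.
-/

open SimpleGraph Finset

namespace IsMatchingOn

variable {G : SimpleGraph V} {F F' : Finset V} {M : Finset (Sym2 V)}

lemma mono (hM : IsMatchingOn G F M) (h : F ⊆ F') : IsMatchingOn G F' M :=
  ⟨hM.1, fun e he v hv => h (hM.2.1 e he v hv), hM.2.2⟩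

lemma of_not_adj (hM : IsMatchingOn G F M) (h : ∀ x ∈ F, x ∉ F' → ∀ y ∈ F, ¬ G.Adj x y) :
    IsMatchingOn G F' M := by
  refine ⟨hM.1, fun e he => ?_, hM.2.2⟩
  induction e using Sym2.ind with
  | _ x y =>
    have hx := hM.2.1 _ he x (Sym2.mem_mk_left x y)
    have hy := hM.2.1 _ he y (Sym2.mem_mk_right x y)
    have hxy : G.Adj x y := hM.1 _ he
    intro z hz
    by_contra hzF'
    rcases Sym2.mem_iff.mp hz with rfl | rfl
    · exact h z hx hzF' y hy hxy
    · exact h z hy hzF' x hx hxy.symm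

lemma two_mul_card_le [DecidableEq V] (hM : IsMatchingOn G F M) : 2 * #M ≤ #F := by
  have hdisj : (M : Set (Sym2 V)).PairwiseDisjoint Sym2.toFinset :=
    fun e he e' he' hne => disjoint_left.mpr fun v hv hv' =>
      hM.2.2 e he e' he' hne v (Sym2.mem_toFinset.mp hv) (Sym2.mem_toFinset.mp hv')
  calc 2 * #M = ∑ e ∈ M, #e.toFinset := by
        rw [sum_congr rfl fun e he => Sym2.card_toFinset_of_not_isDiag e
          (G.not_isDiag_of_mem_edgeSet (hM.1 e he)), sum_const, smul_eq_mul, mul_comm]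
    _ = #(M.biUnion Sym2.toFinset) := (card_biUnion hdisj).symm
    _ ≤ #F := card_le_card <| biUnion_subset.mpr fun e he v hv =>
        hM.2.1 e he v (Sym2.mem_toFinset.mp hv)

lemma exists_insert_edge [DecidableEq V] (hM : IsMatchingOn G F M) {x y : V} (hxy : G.Adj x y)
    (hx : x ∉ F) (hy : y ∉ F) :
    ∃ M', IsMatchingOn G (insert x (insert y F)) M' ∧ #M' = #M + 1 := by
  have hout : ∀ v ∈ s(x, y), v ∉ F := fun v hv => by
    rcases Sym2.mem_iff.mp hv with rfl | rfl <;> assumption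
  have hnew : s(x, y) ∉ M := fun h =>
    hout x (Sym2.mem_mk_left x y) (hM.2.1 _ h x (Sym2.mem_mk_left x y))
  refine ⟨insert s(x, y) M, ⟨?_, ?_, ?_⟩, card_insert_of_notMem hnew⟩
  · simpa [Set.insert_subset_iff] using ⟨hxy, hM.1⟩
  · intro e he v hv
    rcases mem_insert.mp he with rfl | he
    · rcases Sym2.mem_iff.mp hv with rfl | rfl <;> simp
    · exact mem_insert_of_mem (mem_insert_of_mem (hM.2.1 e he v hv))
  · intro e he e' he' hne v hv hv'
    rcases mem_insert.mp he with rfl | he <;> rcases mem_insert.mp he' with rfl | he'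
    · exact hne rfl
    · exact hout v hv (hM.2.1 _ he' v hv')
    · exact hout v hv' (hM.2.1 _ he v hv)
    · exact hM.2.2 e he e' he' hne v hv hv'

lemma map {W : Type*} {G' : SimpleGraph W} (hM : IsMatchingOn G F M) (f : G ↪g G') :
    IsMatchingOn G' (F.map f.toEmbedding) (M.map f.toEmbedding.sym2Map) := by
  simp only [IsMatchingOn, mem_map, Function.Embedding.sym2Map_apply]
  refine ⟨?_, ?_, ?_⟩
  · rintro _ ⟨e, he, rfl⟩
    exact f.map_mem_edgeSet_iff.mpr (hM.1 e he)
  · rintro _ ⟨e, he, rfl⟩ _ hfv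
    obtain ⟨v, hv, rfl⟩ := Sym2.mem_map.mp hfv
    exact ⟨v, hM.2.1 e he v hv, rfl⟩
  · rintro _ ⟨e, he, rfl⟩ _ ⟨e', he', rfl⟩ hne _ hfv hfv'
    obtain ⟨v, hv, rfl⟩ := Sym2.mem_map.mp hfv
    obtain ⟨v', hv', hvv'⟩ := Sym2.mem_map.mp hfv'
    exact hM.2.2 e he e' he' (fun h => hne (h ▸ rfl)) v hv (f.injective hvv' ▸ hv')

end IsMatchingOn

section Whisker

variable {H : SimpleGraph V}

lemma whisker_adj_inr_iff {a : V} {z : V ⊕ V} : (whisker H).Adj (.inr a) z ↔ z = .inl a := by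
  constructor
  · rintro (⟨_, _, h, _, _⟩ | ⟨b, ⟨h, _⟩ | ⟨h, rfl⟩⟩) <;> simp_all
  · rintro rfl
    exact Or.inr ⟨a, Or.inr ⟨rfl, rfl⟩⟩

lemma whisker_adj_inl_inl {a b : V} : (whisker H).Adj (.inl a) (.inl b) ↔ H.Adj a b := by
  constructor
  · rintro (⟨_, _, h, h', hab⟩ | ⟨_, ⟨_, h⟩ | ⟨h, _⟩⟩) <;> simp_all
  · exact fun h => Or.inl ⟨a, b, rfl, rfl, h⟩

def whiskerInl (H : SimpleGraph V) : H ↪g whisker H :=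
  ⟨.inl, whisker_adj_inl_inl⟩

lemma IsMatchingOn.exists_whisker_insert [DecidableEq V] {S : Finset V} {M : Finset (Sym2 V)}
    (hM : IsMatchingOn H S M) {a : V} (ha : a ∉ S) :
    ∃ M', IsMatchingOn (whisker H)
      (insert (.inl a) (insert (.inr a) (S.map (whiskerInl H).toEmbedding))) M' ∧
      #M' = #M + 1 := by
  simpa using (hM.map (whiskerInl H)).exists_insert_edge (whisker_adj_inr_iff.mpr rfl).symm
    (by simpa [whiskerInl] using ha) (by simp [whiskerInl])

lemma IsFacet.inl_mem_or_inr_mem {q : ℕ} {F : Finset (V ⊕ V)}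
    (hF : IsFacet (MFFace (whisker H) q) F) (a : V) : .inl a ∈ F ∨ .inr a ∈ F := by
  classical
  by_contra! ⟨hl, hr⟩
  have hface : MFFace (whisker H) q (insert (.inr a) F) := by
    rintro ⟨M, hM, hcard⟩
    refine hF.1 ⟨M, hM.of_not_adj fun x hx hxF y hy hxy => ?_, hcard⟩
    obtain rfl : x = .inr a := (mem_insert.mp hx).resolve_right hxF
    obtain rfl := whisker_adj_inr_iff.mp hxy
    exact hl ((mem_insert.mp hy).resolve_left Sum.inl_ne_inr)
  exact hr (hF.2 _ hface (subset_insert _ _) ▸ mem_insert_self _ _)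

lemma IsFacet.fintype_card_le_card [Fintype V] {q : ℕ} {F : Finset (V ⊕ V)}
    (hF : IsFacet (MFFace (whisker H) q) F) : Fintype.card V ≤ #F := by
  classical
  have hsurj : F.image (Sum.elim id id) = univ := eq_univ_of_forall fun a => by
    rcases hF.inl_mem_or_inr_mem a with h | h
    exacts [mem_image_of_mem _ h, mem_image_of_mem _ h]
  simpa [hsurj] using card_image_le (s := F) (f := Sum.elim id id)

end Whisker

namespace SimpleGraph.Walk

variable {G : SimpleGraph V} [DecidableEq V]

lemma IsPath.exists_isMatchingOn_erase {k : ℕ} :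
    ∀ {u v : V} {p : G.Walk u v}, p.IsPath → p.length = 2 * k →
      ∃ M, IsMatchingOn G (p.support.toFinset.erase v) M ∧ #M = k := by
  induction k with
  | zero => exact fun _ _ => ⟨∅, by simp [IsMatchingOn], rfl⟩
  | succ k ih =>
    intro u v p hp hlen
    match p, hp, hlen with
    | cons h (cons h' p), hp, hlen =>
      rw [cons_isPath_iff, cons_isPath_iff, support_cons] at hp
      obtain ⟨⟨hp, hu₁⟩, hu⟩ := hp
      have hu' : _ ∉ p.support := fun h => hu (List.mem_cons_of_mem _ h)
      obtain ⟨M, hM, hcard⟩ := ih hp (by simp only [length_cons] at hlen; omega)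
      obtain ⟨M', hM', hcard'⟩ := hM.exists_insert_edge h (by simp [hu']) (by simp [hu₁])
      refine ⟨M', hM'.mono ?_, by omega⟩
      have hv := p.end_mem_support
      intro z hz
      simp only [mem_insert, mem_erase, List.mem_toFinset, support_cons, List.mem_cons] at hz ⊢
      rcases hz with rfl | rfl | hz
      · exact ⟨fun h => hu' (h ▸ hv), Or.inl rfl⟩
      · exact ⟨fun h => hu₁ (h ▸ hv), Or.inr (Or.inl rfl)⟩
      · exact ⟨hz.1, Or.inr (Or.inr hz.2)⟩

lemma IsCycle.card_support_toFinset {u : V} {c : G.Walk u u} (hc : c.IsCycle) :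
    #c.support.toFinset = c.length := by
  cases c with
  | nil => exact absurd hc not_isCycle_nil
  | cons h p =>
    have hp := ((cons_isCycle_iff p h).mp hc).1
    rw [support_cons, List.toFinset_cons,
      insert_eq_of_mem (List.mem_toFinset.mpr p.end_mem_support),
      List.toFinset_card_of_nodup hp.support_nodup, length_support, length_cons]

lemma IsCycle.exists_isMatchingOn_erase {u a : V} {c : G.Walk u u} (hc : c.IsCycle) {k : ℕ}
    (hlen : c.length = 2 * k + 1) (ha : a ∈ c.support) :
    ∃ M, IsMatchingOn G (c.support.toFinset.erase a) M ∧ #M = k := by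
  have hsupp : (c.rotate a ha).support.toFinset = c.support.toFinset := by
    ext; simp
  rw [← hsupp]
  cases hrot : c.rotate a ha with
  | nil => exact absurd (hrot ▸ hc.rotate ha) not_isCycle_nil
  | cons h p =>
    have hp := ((cons_isCycle_iff p h).mp (hrot ▸ hc.rotate ha)).1
    have hplen : p.length = 2 * k := by
      have := c.length_rotate a ha
      rw [hrot, length_cons] at this
      omega
    obtain ⟨M, hM, hcard⟩ := hp.exists_isMatchingOn_erase hplen
    refine ⟨M, hM.mono ?_, hcard⟩
    rw [support_cons, List.toFinset_cons]
    exact erase_subset_erase _ (subset_insert _ _)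

end SimpleGraph.Walk

lemma image_inl_union_image_inr {W : Type*} [DecidableEq V] [DecidableEq W]
    (S : Finset V) (T : Finset W) :
    S.image .inl ∪ T.image .inr = S.disjSum T := by
  ext (a | a) <;> simp

section Transversal

variable {H : SimpleGraph V} [Fintype V] [DecidableEq V] {S : Finset V}

lemma mfFace_disjSum_compl {q : ℕ} (hS : #S < 2 * q) : MFFace (whisker H) q (S.disjSum Sᶜ) := by
  rintro ⟨M, hM, rfl⟩
  have hM' : IsMatchingOn (whisker H) (S.map .inl) M := hM.of_not_adj fun x hx hxS y hy hxy => by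
    obtain ⟨a, rfl⟩ : ∃ a, x = .inr a := by
      cases x with
      | inl a => exact absurd (by simpa using hx) (by simpa using hxS)
      | inr a => exact ⟨a, rfl⟩
    obtain rfl := whisker_adj_inr_iff.mp hxy
    simp_all
  exact (hM'.two_mul_card_le.trans_eq (card_map _)).not_gt hS

lemma exists_inl_mem_inr_mem_of_disjSum_compl_ssubset {F : Finset (V ⊕ V)}
    (h : S.disjSum Sᶜ ⊂ F) : ∃ a, .inl a ∈ F ∧ .inr a ∈ F := by
  obtain ⟨z, hzF, hz⟩ := exists_of_ssubset h
  cases z with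
  | inl a => exact ⟨a, hzF, h.subset (by simpa using hz)⟩
  | inr a => exact ⟨a, h.subset (by simpa using hz), hzF⟩

/-- `hcrit` says that `S` is factor-critical in `H`. -/
lemma isFacet_disjSum_compl {k : ℕ} (hS : #S = 2 * k + 1)
    (hcrit : ∀ a ∈ S, ∃ M, IsMatchingOn H (S.erase a) M ∧ #M = k) :
    IsFacet (MFFace (whisker H) (k + 1)) (S.disjSum Sᶜ) := by
  refine ⟨mfFace_disjSum_compl (by omega), fun F hF hsub => ?_⟩
  by_contra hne
  obtain ⟨a, hl, hr⟩ :=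
    exists_inl_mem_inr_mem_of_disjSum_compl_ssubset (ssubset_of_subset_of_ne hsub hne)
  obtain ⟨M, hM, hcard⟩ : ∃ M, IsMatchingOn H (S.erase a) M ∧ #M = k := by
    by_cases ha : a ∈ S
    · exact hcrit a ha
    · obtain ⟨b, hb⟩ : S.Nonempty := card_pos.mp (by omega)
      obtain ⟨M, hM, hcard⟩ := hcrit b hb
      exact ⟨M, hM.mono (by simpa [erase_eq_of_notMem ha] using erase_subset b S), hcard⟩
  obtain ⟨M', hM', hcard'⟩ := hM.exists_whisker_insert (notMem_erase a S)
  refine hF ⟨M', hM'.mono ?_, by omega⟩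
  intro z hz
  simp only [mem_insert, mem_map] at hz
  rcases hz with rfl | rfl | ⟨b, hb, rfl⟩
  exacts [hl, hr, hsub (by simpa [whiskerInl] using mem_of_mem_erase hb)]

lemma SimpleGraph.Walk.IsCycle.isFacet_disjSum_compl {u : V} {c : H.Walk u u} (hc : c.IsCycle)
    {k : ℕ} (hlen : c.length = 2 * k + 1) :
    IsFacet (MFFace (whisker H) (k + 1)) (c.support.toFinset.disjSum c.support.toFinsetᶜ) :=
  _root_.isFacet_disjSum_compl (hc.card_support_toFinset.trans hlen) fun _ ha =>
    hc.exists_isMatchingOn_erase hlen (List.mem_toFinset.mp ha)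

end Transversal

/-- if `H` has odd finite girth `m` and `q = (m+1)/2`, then the minimum
cardinality of a facet of `MF^q(W(H))` is `n`; in particular, for any cycle `C` of
length `m` in `H`, the set `V(C) ∪ {y_a : a ∉ V(C)}` is a facet of cardinality `n`. -/
theorem min_facet_card_of_odd_girth
    {V : Type*} [Fintype V] [DecidableEq V] (H : SimpleGraph V)
    (n m q : ℕ) (hn : Fintype.card V = n) (hm : H.girth = (m : ℕ∞)) (hodd : Odd m)
    (hq : q = (m + 1) / 2) :
    (∀ F : Finset (V ⊕ V), IsFacet (MFFace (whisker H) q) F → n ≤ F.card) ∧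
    (∃ F : Finset (V ⊕ V), IsFacet (MFFace (whisker H) q) F ∧ F.card = n) ∧
    (∀ (v : V) (w : H.Walk v v), w.IsCycle → w.length = m →
      IsFacet (MFFace (whisker H) q)
        ((w.support.toFinset.image Sum.inl) ∪
          ((Finset.univ \ w.support.toFinset).image Sum.inr)) ∧
      ((w.support.toFinset.image Sum.inl) ∪
        ((Finset.univ \ w.support.toFinset).image Sum.inr)).card = n) := by
  obtain ⟨k, rfl⟩ := hodd
  obtain rfl : q = k + 1 := by omega
  subst hn
  have hcyclic : ¬ H.IsAcyclic := fun h => by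
    rw [girth_eq_zero.mpr h] at hm
    exact absurd (ENat.natCast_inj.mp hm) (by omega)
  obtain ⟨v, w, hw, hlen⟩ := exists_girth_eq_length.mpr hcyclic
  simp only [← compl_eq_univ_sdiff, image_inl_union_image_inr, card_disjSum, card_add_card_compl,
    and_true]
  exact ⟨fun F hF => hF.fintype_card_le_card,
    ⟨_, hw.isFacet_disjSum_compl (by exact_mod_cast hlen ▸ hm), by simp⟩,
    fun _ _ hw' => hw'.isFacet_disjSum_compl⟩
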